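/- arXiv:1306.3498 — 5 statements merged into one kernel-verified Lean document; each statement's English description precedes it below -/
import Mathlib

section
/- Let (X,d) be a complete metric space, f, g : X → X with f(X) ⊆ g(X) and g(X) closed. Suppose there exist α : X × X → [0,∞) and a (c)-comparison function ψ such that α(gx,gy)·d(fx,fy) ≤ ψ(M(gx,gy)) for all x,y ∈ X, where M(gx,gy) = max{d(gx,gy), (d(gx,fx)+d(gy,fy))/2, (d(gx,fy)+d(gy,fx))/2}. Assume: (i) f is α-admissible with respect to g (α(gx,gy) ≥ 1 implies α(fx,fy) ≥ 1); (ii) there exists x₀ ∈ X with α(gx₀, fx₀) ≥ 1; (iii) whenever {gxₙ} is a sequence with α(gxₙ, gxₙ₊₁) ≥ 1 for all n and gxₙ → gz ∈ g(X), there is a subsequence {gx_{n(k)}} with α(gx_{n(k)}, gz) ≥ 1 for all k. Then f and g have a coincidence point, i.e., there exists z ∈ X with fz = gz. -/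
/-!
Pick a sequence with `g xₙ₊₁ = f xₙ`. Admissibility propagates `α(gx₀, fx₀) ≥ 1` along it, so the
contractive condition applies to consecutive terms; since `ψ t < t` for `t > 0`, it gives
`d(gxₙ₊₁, gxₙ₊₂) ≤ ψ(d(gxₙ, gxₙ₊₁))`, whence `d(gxₙ, gxₙ₊₁) ≤ ψⁿ(t)` and `(gxₙ)` is Cauchy. Its limit
is some `gz` because `g(X)` is closed, and applying the contractive condition to `(x_{n(k)}, z)`
along the subsequence given by regularity shows `d(gz, fz) < d(gz, fz)` unless `fz = gz`.
-/

open Filter Topology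

section Comparison

variable {ψ : ℝ → ℝ}

lemma le_iterate_of_le_apply (hψ : MonotoneOn ψ (Set.Ici 0)) {t : ℝ} (ht : 0 ≤ t)
    (h : t ≤ ψ t) (n : ℕ) : t ≤ ψ^[n] t := by
  induction n with
  | zero => rfl
  | succ n ih =>
    rw [Function.iterate_succ_apply']
    exact h.trans (hψ ht (ht.trans ih) ih)

lemma apply_lt_self_of_summable_iterate (hψ : MonotoneOn ψ (Set.Ici 0)) {t : ℝ} (ht : 0 < t)
    (hsum : Summable fun n : ℕ => ψ^[n + 1] t) : ψ t < t := by
  by_contra! h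
  have : t ≤ 0 := ge_of_tendsto' hsum.tendsto_atTop_zero fun n =>
    le_iterate_of_le_apply hψ ht.le h (n + 1)
  linarith

lemma le_apply_of_le_apply_max (hψ : MonotoneOn ψ (Set.Ici 0)) (hlt : ∀ t, 0 < t → ψ t < t)
    {a b : ℝ} (ha : 0 ≤ a) (hb : 0 ≤ b) (h : b ≤ ψ (max a b)) : b ≤ ψ a := by
  rcases le_total b a with hba | hab
  · rwa [max_eq_left hba] at h
  · rw [max_eq_right hab] at h
    rcases hb.eq_or_lt with rfl | hb
    · exact h.trans (hψ Set.self_mem_Ici ha ha)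
    · exact (lt_irrefl b (h.trans_lt (hlt b hb))).elim

end Comparison

section Sequence

variable {X : Type*} {f g : X → X}

lemma exists_seq_apply_succ_eq (hrange : Set.range f ⊆ Set.range g) (x₀ : X) :
    ∃ x : ℕ → X, x 0 = x₀ ∧ ∀ n, g (x (n + 1)) = f (x n) := by
  choose next hnext using fun u => hrange ⟨u, rfl⟩
  exact ⟨fun n => next^[n] x₀, rfl, fun n => by
    simp only [Function.iterate_succ_apply', hnext]⟩

lemma one_le_alpha_seq {α : X → X → ℝ} {x : ℕ → X}
    (hadm : ∀ x y, 1 ≤ α (g x) (g y) → 1 ≤ α (f x) (f y))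
    (hx : ∀ n, g (x (n + 1)) = f (x n)) (h₀ : 1 ≤ α (g (x 0)) (g (x 1))) (n : ℕ) :
    1 ≤ α (g (x n)) (g (x (n + 1))) := by
  induction n with
  | zero => exact h₀
  | succ n ih => simpa only [hx] using hadm _ _ ih

end Sequence

section Coincidence

variable {X : Type*} [MetricSpace X] {f g : X → X}

/-- The quantity `M(gx, gy)` of the contractive condition. -/
noncomputable def jungckMax (f g : X → X) (x y : X) : ℝ :=
  max (dist (g x) (g y)) (max ((dist (g x) (f x) + dist (g y) (f y)) / 2)
    ((dist (g x) (f y) + dist (g y) (f x)) / 2))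

lemma dist_le_jungckMax (x y : X) : dist (g x) (g y) ≤ jungckMax f g x y :=
  le_max_left _ _

lemma jungckMax_le_of_apply_eq {x y : X} (h : f x = g y) :
    jungckMax f g x y ≤ max (dist (g x) (g y)) (dist (g y) (f y)) := by
  have htri : dist (g x) (f y) ≤ dist (g x) (g y) + dist (g y) (f y) := dist_triangle _ _ _
  have h₁ := le_max_left (dist (g x) (g y)) (dist (g y) (f y))
  have h₂ := le_max_right (dist (g x) (g y)) (dist (g y) (f y))
  refine max_le h₁ (max_le ?_ ?_)
  · rw [h]; linarith
  · rw [h, dist_self]; linarith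

lemma jungckMax_le_add (x z : X) :
    jungckMax f g x z ≤ dist (g x) (g z) + dist (g z) (f x) + dist (g z) (f z) / 2 := by
  have h₁ : dist (g x) (f x) ≤ dist (g x) (g z) + dist (g z) (f x) := dist_triangle _ _ _
  have h₂ : dist (g x) (f z) ≤ dist (g x) (g z) + dist (g z) (f z) := dist_triangle _ _ _
  have h₃ := dist_nonneg (x := g z) (y := f x)
  have h₄ := dist_nonneg (x := g z) (y := f z)
  have h₅ := dist_nonneg (x := g x) (y := g z)
  refine max_le (by linarith) (max_le ?_ ?_) <;> linarith

variable {α : X → X → ℝ} {ψ : ℝ → ℝ} {x : ℕ → X}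

lemma dist_le_apply_dist_of_apply_eq (hψ : MonotoneOn ψ (Set.Ici 0))
    (hlt : ∀ t, 0 < t → ψ t < t)
    (hcontr : ∀ x y, α (g x) (g y) * dist (f x) (f y) ≤ ψ (jungckMax f g x y))
    {x y : X} (hxy : f x = g y) (hα : 1 ≤ α (g x) (g y)) :
    dist (g y) (f y) ≤ ψ (dist (g x) (g y)) := by
  have h := (le_mul_of_one_le_left dist_nonneg hα).trans (hcontr x y)
  rw [hxy] at h
  refine le_apply_of_le_apply_max hψ hlt dist_nonneg dist_nonneg (h.trans ?_)
  exact hψ (dist_nonneg.trans (dist_le_jungckMax _ _)) (le_max_of_le_left dist_nonneg)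
    (jungckMax_le_of_apply_eq hxy)

lemma dist_seq_le_iterate (hψ : MonotoneOn ψ (Set.Ici 0)) (hlt : ∀ t, 0 < t → ψ t < t)
    (hcontr : ∀ x y, α (g x) (g y) * dist (f x) (f y) ≤ ψ (jungckMax f g x y))
    (hx : ∀ n, g (x (n + 1)) = f (x n)) (hα : ∀ n, 1 ≤ α (g (x n)) (g (x (n + 1))))
    {t : ℝ} (ht : dist (g (x 0)) (g (x 1)) ≤ t) (n : ℕ) :
    dist (g (x n)) (g (x (n + 1))) ≤ ψ^[n] t := by
  induction n with
  | zero => exact ht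
  | succ n ih =>
    have hstep := dist_le_apply_dist_of_apply_eq hψ hlt hcontr (hx n).symm (hα n)
    rw [← hx (n + 1)] at hstep
    rw [Function.iterate_succ_apply']
    exact hstep.trans (hψ dist_nonneg (dist_nonneg.trans ih) ih)

lemma apply_eq_of_tendsto (hψ : MonotoneOn ψ (Set.Ici 0)) (hlt : ∀ t, 0 < t → ψ t < t)
    (hcontr : ∀ x y, α (g x) (g y) * dist (f x) (f y) ≤ ψ (jungckMax f g x y))
    {u : ℕ → X} {z : X} (hα : ∀ k, 1 ≤ α (g (u k)) (g z))
    (hgu : Tendsto (fun k => g (u k)) atTop (𝓝 (g z)))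
    (hfu : Tendsto (fun k => f (u k)) atTop (𝓝 (g z))) : f z = g z := by
  by_contra hne
  set ε := dist (g z) (f z)
  have hε : 0 < ε := dist_pos.2 (Ne.symm hne)
  obtain ⟨k, hgk, hfk⟩ := ((tendsto_iff_dist_tendsto_zero.1 hgu).eventually_lt_const
    (by positivity : 0 < ε / 8) |>.and <|
    (tendsto_iff_dist_tendsto_zero.1 hfu).eventually_lt_const (by positivity : 0 < ε / 8)).exists
  rw [dist_comm] at hfk
  -- `ψ` need not be continuous, so `M(g uₖ, gz) → ε/2` is only used through the bound `3ε/4`.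
  have hM : jungckMax f g (u k) z ≤ 3 * ε / 4 := by
    have := jungckMax_le_add (f := f) (g := g) (u k) z
    linarith
  have hfuz : dist (f (u k)) (f z) ≤ ψ (3 * ε / 4) :=
    (le_mul_of_one_le_left dist_nonneg (hα k)).trans <| (hcontr (u k) z).trans <|
      hψ (dist_nonneg.trans (dist_le_jungckMax _ _)) (Set.mem_Ici.2 (by positivity)) hM
  have := hlt (3 * ε / 4) (by positivity)
  have := dist_triangle (g z) (f (u k)) (f z)
  linarith

end Coincidence

theorem coincidence_point_generalized_alpha_psi_general
    {X : Type*} [MetricSpace X] [CompleteSpace X]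
    (f g : X → X) (hrange : Set.range f ⊆ Set.range g)
    (hclosed : IsClosed (Set.range g))
    (α : X → X → ℝ)
    (ψ : ℝ → ℝ)
    (hmono : ∀ s t : ℝ, 0 ≤ s → s ≤ t → ψ s ≤ ψ t)
    (hsum : ∀ t : ℝ, 0 < t → Summable (fun n : ℕ => ψ^[n + 1] t))
    (hcontr : ∀ x y : X, α (g x) (g y) * dist (f x) (f y) ≤
      ψ (max (dist (g x) (g y)) (max ((dist (g x) (f x) + dist (g y) (f y)) / 2)
        ((dist (g x) (f y) + dist (g y) (f x)) / 2))))
    (hadm : ∀ x y : X, 1 ≤ α (g x) (g y) → 1 ≤ α (f x) (f y))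
    (hx0 : ∃ x0 : X, 1 ≤ α (g x0) (f x0))
    (hreg : ∀ (x : ℕ → X) (z : X), (∀ n, 1 ≤ α (g (x n)) (g (x (n + 1)))) →
      Tendsto (fun n => g (x n)) atTop (𝓝 (g z)) →
      ∃ φ : ℕ → ℕ, StrictMono φ ∧ ∀ k, 1 ≤ α (g (x (φ k))) (g z)) :
    ∃ z : X, f z = g z := by
  have hψ : MonotoneOn ψ (Set.Ici 0) := fun s hs t _ hst => hmono s t hs hst
  have hlt : ∀ t, 0 < t → ψ t < t := fun t ht => apply_lt_self_of_summable_iterate hψ ht (hsum t ht)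
  obtain ⟨x₀, hx₀⟩ := hx0
  obtain ⟨x, rfl, hx⟩ := exists_seq_apply_succ_eq hrange x₀
  have hα := one_le_alpha_seq hadm hx (by rwa [hx 0])
  -- `t > 0` is needed for summability; any upper bound of the first step will do.
  set t := dist (g (x 0)) (g (x 1)) + 1
  have hd := dist_seq_le_iterate hψ hlt hcontr hx hα (le_add_of_nonneg_right zero_le_one : _ ≤ t)
  have hcauchy : CauchySeq fun n => g (x n) :=
    cauchySeq_of_dist_le_of_summable _ hd ((summable_nat_add_iff 1).1 (hsum t (by positivity)))
  obtain ⟨y, hy⟩ := cauchySeq_tendsto_of_complete hcauchy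
  obtain ⟨z, rfl⟩ : y ∈ Set.range g := hclosed.mem_of_tendsto hy (.of_forall fun n => ⟨x n, rfl⟩)
  obtain ⟨φ, hφ, hαφ⟩ := hreg x z hα hy
  refine ⟨z, apply_eq_of_tendsto hψ hlt hcontr hαφ (hy.comp hφ.tendsto_atTop) ?_⟩
  simpa only [Function.comp_def, hx] using (hy.comp (tendsto_add_atTop_nat 1)).comp hφ.tendsto_atTop

theorem coincidence_point_generalized_alpha_psi
    {X : Type*} [MetricSpace X] [CompleteSpace X]
    (f g : X → X) (hrange : Set.range f ⊆ Set.range g)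
    (hclosed : IsClosed (Set.range g))
    (α : X → X → ℝ) (hα : ∀ x y, 0 ≤ α x y)
    (ψ : ℝ → ℝ)
    (hmono : ∀ s t : ℝ, 0 ≤ s → s ≤ t → ψ s ≤ ψ t)
    (hnonneg : ∀ t : ℝ, 0 ≤ t → 0 ≤ ψ t)
    (hsum : ∀ t : ℝ, 0 < t → Summable (fun n : ℕ => ψ^[n + 1] t))
    (hcontr : ∀ x y : X, α (g x) (g y) * dist (f x) (f y) ≤
      ψ (max (dist (g x) (g y)) (max ((dist (g x) (f x) + dist (g y) (f y)) / 2)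
        ((dist (g x) (f y) + dist (g y) (f x)) / 2))))
    (hadm : ∀ x y : X, 1 ≤ α (g x) (g y) → 1 ≤ α (f x) (f y))
    (hx0 : ∃ x0 : X, 1 ≤ α (g x0) (f x0))
    (hreg : ∀ (x : ℕ → X) (z : X), (∀ n, 1 ≤ α (g (x n)) (g (x (n + 1)))) →
      Tendsto (fun n => g (x n)) atTop (𝓝 (g z)) →
      ∃ φ : ℕ → ℕ, StrictMono φ ∧ ∀ k, 1 ≤ α (g (x (φ k))) (g z)) :
    ∃ z : X, f z = g z :=
  coincidence_point_generalized_alpha_psi_general f g hrange hclosed α ψ hmono hsum hcontr hadm hx0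
    hreg
end

section
/- Under the hypotheses of the coincidence point theorem for a generalized α-ψ contractive pair (f,g) on a complete metric space (X,d) with f(X) ⊆ g(X), g(X) closed, f α-admissible w.r.t. g, existence of x₀ with α(gx₀, fx₀) ≥ 1, and the subsequence regularity condition, assume additionally that: for all coincidence points u, v of f and g there exists w ∈ X such that α(gu, gw) ≥ 1 and α(gv, gw) ≥ 1, and that f and g commute at their coincidence points (fz = gz implies fgz = gfz). Then f and g have a unique common fixed point, i.e., there is a unique z with fz = gz = z. -/
/-!
Since `f(X) ⊆ g(X)`, starting from `x₀` one can choose a Jungck sequence, `f xₙ = g xₙ₊₁`.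
Its consecutive `g`-distances are bounded by `ψⁿ(d(gx₀, gx₁))`, a summable sequence, so `(g xₙ)`
is Cauchy and converges to some `g z` in the closed set `g(X)`. Since `ψ t < t` for `t > 0`, the
contractive inequality along the regular subsequence forces `f z = g z`. Two coincidence points
`u, v` have a common `α`-successor `w`, and the Jungck sequence from `w` converges to both `g u`
and `g v`, so the point of coincidence is unique; weak compatibility then makes `g z` the unique
common fixed point.
-/

open Filter Topology

/-- The quantity `M(gx, gy)` of the contractive condition. -/
noncomputable def contractionBound {X : Type*} [MetricSpace X] (f g : X → X) (x y : X) : ℝ :=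
  max (dist (g x) (g y))
    (max ((dist (g x) (f x) + dist (g y) (f y)) / 2) ((dist (g x) (f y) + dist (g y) (f x)) / 2))

structure IsCComparison (ψ : ℝ → ℝ) : Prop where
  monotoneOn : MonotoneOn ψ (Set.Ici 0)
  nonneg : ∀ t, 0 ≤ t → 0 ≤ ψ t
  summable_iterate : ∀ t, 0 < t → Summable fun n : ℕ => ψ^[n + 1] t

namespace IsCComparison

variable {ψ : ℝ → ℝ}

theorem iterate_nonneg (hψ : IsCComparison ψ) {t : ℝ} (ht : 0 ≤ t) (n : ℕ) :
    0 ≤ ψ^[n] t := by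
  induction n with
  | zero => exact ht
  | succ n ih => rw [Function.iterate_succ_apply']; exact hψ.nonneg _ ih

theorem lt_self (hψ : IsCComparison ψ) {t : ℝ} (ht : 0 < t) : ψ t < t := by
  by_contra! hle
  have hiter : ∀ n, t ≤ ψ^[n] t := by
    intro n
    induction n with
    | zero => exact le_rfl
    | succ n ih =>
      rw [Function.iterate_succ_apply']
      exact hle.trans (hψ.monotoneOn ht.le (hψ.iterate_nonneg ht.le n) ih)
  have : t ≤ 0 := ge_of_tendsto (hψ.summable_iterate t ht).tendsto_atTop_zero
    (Eventually.of_forall fun n => hiter (n + 1))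
  linarith

theorem map_zero (hψ : IsCComparison ψ) : ψ 0 = 0 := by
  by_contra h
  have hpos : 0 < ψ 0 := (hψ.nonneg 0 le_rfl).lt_of_ne' h
  exact (hψ.monotoneOn (Set.mem_Ici.2 le_rfl) hpos.le hpos.le).not_gt (hψ.lt_self hpos)

theorem summable_iterate_of_nonneg (hψ : IsCComparison ψ) {t : ℝ} (ht : 0 ≤ t) :
    Summable fun n : ℕ => ψ^[n] t := by
  rcases ht.eq_or_lt with rfl | ht
  · simp [Function.iterate_fixed hψ.map_zero]
  · exact (summable_nat_add_iff 1).mp (hψ.summable_iterate t ht)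

theorem le_of_le_apply_of_le_max (hψ : IsCComparison ψ) {a b m : ℝ} (ha : 0 ≤ a) (hb : 0 ≤ b)
    (hm : 0 ≤ m) (hbm : b ≤ ψ m) (hmax : m ≤ max a b) : b ≤ ψ a := by
  have hb' : b ≤ ψ (max a b) := hbm.trans (hψ.monotoneOn hm (ha.trans (le_max_left a b)) hmax)
  rcases le_total b a with hba | hab
  · rwa [max_eq_left hba] at hb'
  · rw [max_eq_right hab] at hb'
    rcases hb.eq_or_lt with rfl | hb
    · exact hψ.nonneg a ha
    · exact absurd hb' (hψ.lt_self hb).not_ge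

theorem le_iterate_of_le_apply (hψ : IsCComparison ψ) {u : ℕ → ℝ} (hu : ∀ n, 0 ≤ u n)
    (hstep : ∀ n, u (n + 1) ≤ ψ (u n)) (n : ℕ) : u n ≤ ψ^[n] (u 0) := by
  induction n with
  | zero => exact le_rfl
  | succ n ih =>
    rw [Function.iterate_succ_apply']
    exact (hstep n).trans (hψ.monotoneOn (hu n) (hψ.iterate_nonneg (hu 0) n) ih)

end IsCComparison

def IsAlphaPsiContractive {X : Type*} [MetricSpace X] (α : X → X → ℝ) (ψ : ℝ → ℝ)
    (f g : X → X) : Prop :=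
  ∀ x y, α (g x) (g y) * dist (f x) (f y) ≤ ψ (contractionBound f g x y)

def IsAlphaAdmissible {X : Type*} (α : X → X → ℝ) (f g : X → X) : Prop :=
  ∀ x y, 1 ≤ α (g x) (g y) → 1 ≤ α (f x) (f y)

section Contraction

variable {X : Type*} {f g : X → X} {α : X → X → ℝ}

theorem exists_jungck_seq (hrange : Set.range f ⊆ Set.range g) (x₀ : X) :
    ∃ x : ℕ → X, x 0 = x₀ ∧ ∀ n, f (x n) = g (x (n + 1)) := by
  choose next hnext using fun x => hrange ⟨x, rfl⟩
  exact ⟨fun n => next^[n] x₀, rfl, fun n =>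
    (hnext _).symm.trans (congrArg g (Function.iterate_succ_apply' next n x₀).symm)⟩

theorem IsAlphaAdmissible.one_le_alpha_succ (hadm : IsAlphaAdmissible α f g)
    {x : ℕ → X} (hx : ∀ n, f (x n) = g (x (n + 1))) (h₀ : 1 ≤ α (g (x 0)) (g (x 1))) (n : ℕ) :
    1 ≤ α (g (x n)) (g (x (n + 1))) := by
  induction n with
  | zero => exact h₀
  | succ n ih => rw [← hx n, ← hx (n + 1)]; exact hadm _ _ ih

variable [MetricSpace X] {ψ : ℝ → ℝ}

theorem contractionBound_nonneg (x y : X) : 0 ≤ contractionBound f g x y :=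
  le_max_of_le_left dist_nonneg

theorem IsAlphaPsiContractive.dist_le (hcontr : IsAlphaPsiContractive α ψ f g) {x y : X}
    (h : 1 ≤ α (g x) (g y)) : dist (f x) (f y) ≤ ψ (contractionBound f g x y) :=
  (le_mul_of_one_le_left dist_nonneg h).trans (hcontr x y)

theorem IsAlphaPsiContractive.dist_succ_le (hψ : IsCComparison ψ)
    (hcontr : IsAlphaPsiContractive α ψ f g) {x y z : X} (hxy : f x = g y) (hyz : f y = g z)
    (h : 1 ≤ α (g x) (g y)) : dist (g y) (g z) ≤ ψ (dist (g x) (g y)) := by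
  refine hψ.le_of_le_apply_of_le_max dist_nonneg dist_nonneg (contractionBound_nonneg x y)
    (by simpa only [hxy, hyz] using hcontr.dist_le h) ?_
  have := dist_triangle (g x) (g y) (g z)
  rw [contractionBound, hxy, hyz, dist_self, add_zero]
  refine max_le (le_max_left _ _) (max_le ?_ ?_) <;>
    linarith [le_max_left (dist (g x) (g y)) (dist (g y) (g z)),
      le_max_right (dist (g x) (g y)) (dist (g y) (g z))]

theorem IsAlphaPsiContractive.dist_le_of_coincidence (hψ : IsCComparison ψ)
    (hcontr : IsAlphaPsiContractive α ψ f g) {p w w' : X} (hp : f p = g p) (hw : f w = g w')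
    (h : 1 ≤ α (g p) (g w)) : dist (g p) (g w') ≤ ψ (dist (g p) (g w)) := by
  refine hψ.le_of_le_apply_of_le_max dist_nonneg dist_nonneg (contractionBound_nonneg p w)
    (by simpa only [hp, hw] using hcontr.dist_le h) ?_
  have := dist_triangle (g w) (g p) (g w')
  rw [dist_comm (g w) (g p)] at this
  rw [contractionBound, hp, hw, dist_self, zero_add, dist_comm (g w) (g p)]
  refine max_le (le_max_left _ _) (max_le ?_ ?_) <;>
    linarith [le_max_left (dist (g p) (g w)) (dist (g p) (g w')),
      le_max_right (dist (g p) (g w)) (dist (g p) (g w'))]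

variable {x : ℕ → X}

theorem IsAlphaPsiContractive.cauchySeq_of_jungck (hψ : IsCComparison ψ)
    (hcontr : IsAlphaPsiContractive α ψ f g) (hadm : IsAlphaAdmissible α f g)
    (hx : ∀ n, f (x n) = g (x (n + 1))) (h₀ : 1 ≤ α (g (x 0)) (g (x 1))) :
    CauchySeq fun n => g (x n) :=
  cauchySeq_of_dist_le_of_summable _
    (hψ.le_iterate_of_le_apply (fun _ => dist_nonneg) fun n =>
      hcontr.dist_succ_le hψ (hx n) (hx (n + 1)) (hadm.one_le_alpha_succ hx h₀ n))
    (hψ.summable_iterate_of_nonneg dist_nonneg)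

theorem IsAlphaPsiContractive.tendsto_of_jungck_of_coincidence (hψ : IsCComparison ψ)
    (hcontr : IsAlphaPsiContractive α ψ f g) (hadm : IsAlphaAdmissible α f g)
    (hx : ∀ n, f (x n) = g (x (n + 1))) {p : X} (hp : f p = g p) (h₀ : 1 ≤ α (g p) (g (x 0))) :
    Tendsto (fun n => g (x n)) atTop (𝓝 (g p)) := by
  have hα : ∀ n, 1 ≤ α (g p) (g (x n)) := by
    intro n
    induction n with
    | zero => exact h₀
    | succ n ih => rw [← hx n, ← hp]; exact hadm _ _ ih
  have hbound := hψ.le_iterate_of_le_apply (u := fun n => dist (g p) (g (x n)))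
    (fun _ => dist_nonneg) fun n => hcontr.dist_le_of_coincidence hψ hp (hx n) (hα n)
  rw [tendsto_iff_dist_tendsto_zero]
  simpa only [dist_comm] using squeeze_zero (fun _ => dist_nonneg) hbound
    (hψ.summable_iterate_of_nonneg dist_nonneg).tendsto_atTop_zero

theorem IsAlphaPsiContractive.apply_eq_of_coincidence (hψ : IsCComparison ψ)
    (hcontr : IsAlphaPsiContractive α ψ f g) (hadm : IsAlphaAdmissible α f g)
    (hrange : Set.range f ⊆ Set.range g) {u v w : X} (hu : f u = g u) (hv : f v = g v)
    (hwu : 1 ≤ α (g u) (g w)) (hwv : 1 ≤ α (g v) (g w)) : g u = g v := by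
  obtain ⟨x, rfl, hx⟩ := exists_jungck_seq hrange w
  exact tendsto_nhds_unique (hcontr.tendsto_of_jungck_of_coincidence hψ hadm hx hu hwu)
    (hcontr.tendsto_of_jungck_of_coincidence hψ hadm hx hv hwv)

theorem IsAlphaPsiContractive.coincidence_of_tendsto (hψ : IsCComparison ψ)
    (hcontr : IsAlphaPsiContractive α ψ f g) {y : ℕ → X} {z : X}
    (hgy : Tendsto (fun k => g (y k)) atTop (𝓝 (g z)))
    (hfy : Tendsto (fun k => f (y k)) atTop (𝓝 (g z))) (hα : ∀ k, 1 ≤ α (g (y k)) (g z)) :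
    f z = g z := by
  by_contra hne
  set D := dist (g z) (f z)
  have hD : 0 < D := dist_pos.2 (Ne.symm hne)
  have hM : Tendsto (fun k => contractionBound f g (y k) z) atTop (𝓝 (max (dist (g z) (g z))
      (max ((dist (g z) (g z) + D) / 2) ((D + dist (g z) (g z)) / 2)))) :=
    (hgy.dist tendsto_const_nhds).max ((((hgy.dist hfy).add tendsto_const_nhds).div_const 2).max
      (((hgy.dist tendsto_const_nhds).add (tendsto_const_nhds.dist hfy)).div_const 2))
  have hM' : max (dist (g z) (g z))
      (max ((dist (g z) (g z) + D) / 2) ((D + dist (g z) (g z)) / 2)) = D / 2 := by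
    simp only [dist_self, zero_add, add_zero, max_self]
    exact max_eq_right (by positivity)
  rw [hM'] at hM
  -- any threshold strictly between `D / 2` and `D` would do
  have hbound : ∀ᶠ k in atTop, dist (f (y k)) (f z) ≤ ψ (3 * D / 4) :=
    (hM.eventually (gt_mem_nhds (by linarith))).mono fun k hk =>
      (hcontr.dist_le (hα k)).trans (hψ.monotoneOn (contractionBound_nonneg _ _) (by
        simp only [Set.mem_Ici]; positivity) hk.le)
  have hDle : D ≤ ψ (3 * D / 4) := le_of_tendsto (hfy.dist tendsto_const_nhds) hbound
  linarith [hψ.lt_self (by positivity : 0 < 3 * D / 4)]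

theorem IsAlphaPsiContractive.exists_coincidence [CompleteSpace X] (hψ : IsCComparison ψ)
    (hcontr : IsAlphaPsiContractive α ψ f g) (hadm : IsAlphaAdmissible α f g)
    (hrange : Set.range f ⊆ Set.range g) (hclosed : IsClosed (Set.range g))
    {x₀ : X} (hx₀ : 1 ≤ α (g x₀) (f x₀))
    (hreg : ∀ (x : ℕ → X) (z : X), (∀ n, 1 ≤ α (g (x n)) (g (x (n + 1)))) →
      Tendsto (fun n => g (x n)) atTop (𝓝 (g z)) →
      ∃ φ : ℕ → ℕ, StrictMono φ ∧ ∀ k, 1 ≤ α (g (x (φ k))) (g z)) :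
    ∃ z, f z = g z := by
  obtain ⟨x, rfl, hx⟩ := exists_jungck_seq hrange x₀
  have h₀ : 1 ≤ α (g (x 0)) (g (x 1)) := hx 0 ▸ hx₀
  obtain ⟨L, hL⟩ := cauchySeq_tendsto_of_complete (hcontr.cauchySeq_of_jungck hψ hadm hx h₀)
  obtain ⟨z, rfl⟩ := hclosed.mem_of_tendsto hL (Eventually.of_forall fun n => ⟨x n, rfl⟩)
  obtain ⟨φ, hφ, hαφ⟩ := hreg x z (hadm.one_le_alpha_succ hx h₀) hL
  have hf : Tendsto (fun n => f (x n)) atTop (𝓝 (g z)) := by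
    simpa only [hx, Function.comp_def] using hL.comp (tendsto_add_atTop_nat 1)
  exact ⟨z, hcontr.coincidence_of_tendsto hψ (hL.comp hφ.tendsto_atTop)
    (hf.comp hφ.tendsto_atTop) hαφ⟩

end Contraction

theorem unique_common_fixed_point_generalized_alpha_psi_general
    {X : Type*} [MetricSpace X] [CompleteSpace X]
    (f g : X → X) (hrange : Set.range f ⊆ Set.range g)
    (hclosed : IsClosed (Set.range g))
    (α : X → X → ℝ)
    (ψ : ℝ → ℝ)
    (hmono : ∀ s t : ℝ, 0 ≤ s → s ≤ t → ψ s ≤ ψ t)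
    (hnonneg : ∀ t : ℝ, 0 ≤ t → 0 ≤ ψ t)
    (hsum : ∀ t : ℝ, 0 < t → Summable (fun n : ℕ => ψ^[n + 1] t))
    (hcontr : ∀ x y : X, α (g x) (g y) * dist (f x) (f y) ≤
      ψ (max (dist (g x) (g y)) (max ((dist (g x) (f x) + dist (g y) (f y)) / 2)
        ((dist (g x) (f y) + dist (g y) (f x)) / 2))))
    (hadm : ∀ x y : X, 1 ≤ α (g x) (g y) → 1 ≤ α (f x) (f y))
    (hx0 : ∃ x0 : X, 1 ≤ α (g x0) (f x0))
    (hreg : ∀ (x : ℕ → X) (z : X), (∀ n, 1 ≤ α (g (x n)) (g (x (n + 1)))) →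
      Tendsto (fun n => g (x n)) atTop (𝓝 (g z)) →
      ∃ φ : ℕ → ℕ, StrictMono φ ∧ ∀ k, 1 ≤ α (g (x (φ k))) (g z))
    (hub : ∀ u v : X, f u = g u → f v = g v →
      ∃ w : X, 1 ≤ α (g u) (g w) ∧ 1 ≤ α (g v) (g w))
    (hcomm : ∀ z : X, f z = g z → f (g z) = g (f z)) :
    ∃! z : X, f z = z ∧ g z = z := by
  have hψ : IsCComparison ψ := ⟨fun s hs _ _ hst => hmono s _ hs hst, hnonneg, hsum⟩
  have hcontr : IsAlphaPsiContractive α ψ f g := hcontr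
  have hpoc : ∀ u v, f u = g u → f v = g v → g u = g v := fun u v hu hv =>
    let ⟨_, hwu, hwv⟩ := hub u v hu hv
    hcontr.apply_eq_of_coincidence hψ hadm hrange hu hv hwu hwv
  obtain ⟨x₀, hx₀⟩ := hx0
  obtain ⟨z, hz⟩ := hcontr.exists_coincidence hψ hadm hrange hclosed hx₀ hreg
  have hgz : f (g z) = g (g z) := by rw [hcomm z hz, hz]
  have hfix : g (g z) = g z := hpoc _ _ hgz hz
  refine ⟨g z, ⟨hgz.trans hfix, hfix⟩, fun y ⟨hfy, hgy⟩ => ?_⟩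
  calc y = g y := hgy.symm
    _ = g (g z) := hpoc y (g z) (hfy.trans hgy.symm) hgz
    _ = g z := hfix

theorem unique_common_fixed_point_generalized_alpha_psi
    {X : Type*} [MetricSpace X] [CompleteSpace X]
    (f g : X → X) (hrange : Set.range f ⊆ Set.range g)
    (hclosed : IsClosed (Set.range g))
    (α : X → X → ℝ) (hα : ∀ x y, 0 ≤ α x y)
    (ψ : ℝ → ℝ)
    (hmono : ∀ s t : ℝ, 0 ≤ s → s ≤ t → ψ s ≤ ψ t)
    (hnonneg : ∀ t : ℝ, 0 ≤ t → 0 ≤ ψ t)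
    (hsum : ∀ t : ℝ, 0 < t → Summable (fun n : ℕ => ψ^[n + 1] t))
    (hcontr : ∀ x y : X, α (g x) (g y) * dist (f x) (f y) ≤
      ψ (max (dist (g x) (g y)) (max ((dist (g x) (f x) + dist (g y) (f y)) / 2)
        ((dist (g x) (f y) + dist (g y) (f x)) / 2))))
    (hadm : ∀ x y : X, 1 ≤ α (g x) (g y) → 1 ≤ α (f x) (f y))
    (hx0 : ∃ x0 : X, 1 ≤ α (g x0) (f x0))
    (hreg : ∀ (x : ℕ → X) (z : X), (∀ n, 1 ≤ α (g (x n)) (g (x (n + 1)))) →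
      Tendsto (fun n => g (x n)) atTop (𝓝 (g z)) →
      ∃ φ : ℕ → ℕ, StrictMono φ ∧ ∀ k, 1 ≤ α (g (x (φ k))) (g z))
    (hub : ∀ u v : X, f u = g u → f v = g v →
      ∃ w : X, 1 ≤ α (g u) (g w) ∧ 1 ≤ α (g v) (g w))
    (hcomm : ∀ z : X, f z = g z → f (g z) = g (f z)) :
    ∃! z : X, f z = z ∧ g z = z :=
  unique_common_fixed_point_generalized_alpha_psi_general f g hrange hclosed α ψ hmono hnonneg hsum
    hcontr hadm hx0 hreg hub hcomm
end

section
/- Under the hypotheses of the common fixed point theorem for a generalized α-ψ contractive pair (f,g), any two coincidence points u, v of f and g satisfy gu = gv. -/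
/-!
Take `w₀` with `α (g u) (g w₀) ≥ 1` and `α (g v) (g w₀) ≥ 1`, and a Picard sequence
`g wₙ₊₁ = f wₙ`, which exists since `f X ⊆ g X`. Admissibility propagates `α (g u) (g wₙ) ≥ 1`,
and since `f u = g u` the contraction condition at `(u, wₙ)` reduces to
`d(gu, gwₙ₊₁) ≤ ψ (d(gu, gwₙ))`, using `ψ t ≤ t`. Hence `d(gu, gwₙ) ≤ ψⁿ (d(gu, gw₀)) → 0`,
so `g wₙ → g u`; likewise `g wₙ → g v`, and limits are unique.
-/

open Filter Topology

structure IsCComparison_s3 (ψ : ℝ → ℝ) : Prop where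
  monotoneOn : MonotoneOn ψ (Set.Ici 0)
  summable_iterate : ∀ t : ℝ, 0 < t → Summable fun n : ℕ => ψ^[n + 1] t

namespace IsCComparison_s3

variable {ψ : ℝ → ℝ} (hψ : IsCComparison_s3 ψ)
include hψ

theorem le_iterate_of_le_apply_s3 {t : ℝ} (ht : 0 ≤ t) (h : t ≤ ψ t) (n : ℕ) : t ≤ ψ^[n] t := by
  induction n with
  | zero => rfl
  | succ n ih =>
    rw [Function.iterate_succ_apply']
    exact h.trans (hψ.monotoneOn ht (ht.trans ih) ih)

theorem tendsto_iterate_zero {t : ℝ} (ht : 0 < t) :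
    Tendsto (fun n : ℕ => ψ^[n] t) atTop (𝓝 0) :=
  (tendsto_add_atTop_iff_nat 1).mp (hψ.summable_iterate t ht).tendsto_atTop_zero

theorem apply_le_self_of_pos {t : ℝ} (ht : 0 < t) : ψ t ≤ t := by
  by_contra! h
  obtain ⟨n, hn⟩ := ((tendsto_order.mp (hψ.tendsto_iterate_zero ht)).2 t ht).exists
  exact hn.not_ge (hψ.le_iterate_of_le_apply_s3 ht.le h.le n)

theorem apply_le_self {t : ℝ} (ht : 0 ≤ t) : ψ t ≤ t := by
  rcases ht.eq_or_lt with rfl | ht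
  · by_contra! h
    -- `ψ 0 > 0` would give `ψ 0 ≤ ψ (ψ 0 / 2) ≤ ψ 0 / 2`.
    have hhalf : (0 : ℝ) ≤ ψ 0 / 2 := by linarith
    have h₁ := hψ.monotoneOn (Set.mem_Ici.2 le_rfl) (Set.mem_Ici.2 hhalf) hhalf
    have h₂ := hψ.apply_le_self_of_pos (by linarith : 0 < ψ 0 / 2)
    linarith
  · exact hψ.apply_le_self_of_pos ht

theorem tendsto_zero_of_le_apply {d : ℕ → ℝ} (hd : ∀ n, 0 ≤ d n)
    (hstep : ∀ n, d (n + 1) ≤ ψ (d n)) : Tendsto d atTop (𝓝 0) := by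
  have hanti : Antitone d :=
    antitone_nat_of_succ_le fun n => (hstep n).trans (hψ.apply_le_self (hd n))
  rcases (hd 0).eq_or_lt with h0 | h0
  · exact tendsto_const_nhds.congr fun n => le_antisymm (hd n) (h0 ▸ hanti (Nat.zero_le n))
  · have hle : ∀ n, d n ≤ ψ^[n] (d 0) := by
      intro n
      induction n with
      | zero => rfl
      | succ n ih =>
        rw [Function.iterate_succ_apply']
        exact (hstep n).trans (hψ.monotoneOn (hd n) ((hd n).trans ih) ih)
    exact squeeze_zero hd hle (hψ.tendsto_iterate_zero h0)

end IsCComparison_s3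

section Coincidence

variable {X : Type*} [MetricSpace X]

theorem IsCComparison_s3.dist_le_apply_dist {ψ : ℝ → ℝ} (hψ : IsCComparison_s3 ψ) {a b c : X}
    (h : dist a c ≤ ψ (max (dist a b)
      (max ((dist a a + dist b c) / 2) ((dist a c + dist b a) / 2)))) :
    dist a c ≤ ψ (dist a b) := by
  set M := max (dist a b) (max ((dist a a + dist b c) / 2) ((dist a c + dist b a) / 2))
  have hM : M ≤ max (dist a b) ((dist a b + dist a c) / 2) := by
    have hbc : dist b c ≤ dist a b + dist a c := dist_triangle_left b c a
    simp only [M, dist_self, dist_comm b a]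
    refine max_le (le_max_left _ _) (max_le ?_ ?_) <;>
      exact le_max_of_le_right (by linarith)
  have hM₀ : 0 ≤ M := dist_nonneg.trans (le_max_left _ _)
  have hac : dist a c ≤ dist a b := by
    have := h.trans ((hψ.apply_le_self hM₀).trans hM)
    rcases max_cases (dist a b) ((dist a b + dist a c) / 2) with ⟨he, -⟩ | ⟨he, -⟩ <;>
      rw [he] at this <;> linarith
  have hMab : M ≤ dist a b := hM.trans (max_le le_rfl (by linarith))
  exact h.trans (hψ.monotoneOn hM₀ dist_nonneg hMab)

theorem tendsto_picard_of_coincidence {f g : X → X} {α : X → X → ℝ} {ψ : ℝ → ℝ}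
    (hψ : IsCComparison_s3 ψ)
    (hcontr : ∀ x y : X, α (g x) (g y) * dist (f x) (f y) ≤
      ψ (max (dist (g x) (g y)) (max ((dist (g x) (f x) + dist (g y) (f y)) / 2)
        ((dist (g x) (f y) + dist (g y) (f x)) / 2))))
    (hadm : ∀ x y : X, 1 ≤ α (g x) (g y) → 1 ≤ α (f x) (f y))
    {u : X} (hu : f u = g u) {w : ℕ → X} (hw : ∀ n, g (w (n + 1)) = f (w n))
    (hα₀ : 1 ≤ α (g u) (g (w 0))) :
    Tendsto (fun n => g (w n)) atTop (𝓝 (g u)) := by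
  have hα : ∀ n, 1 ≤ α (g u) (g (w n)) := by
    intro n
    induction n with
    | zero => exact hα₀
    | succ n ih => simpa only [hu, hw] using hadm u (w n) ih
  have hstep : ∀ n, dist (g u) (g (w (n + 1))) ≤ ψ (dist (g u) (g (w n))) := by
    intro n
    refine hψ.dist_le_apply_dist ?_
    have := hcontr u (w n)
    rw [hu, ← hw] at this
    exact (le_mul_of_one_le_left dist_nonneg (hα n)).trans this
  rw [tendsto_iff_dist_tendsto_zero]
  simp_rw [dist_comm _ (g u)]
  exact hψ.tendsto_zero_of_le_apply (fun n => dist_nonneg) hstep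

end Coincidence

theorem coincidence_values_equal_general
    {X : Type*} [MetricSpace X]
    (f g : X → X) (hrange : Set.range f ⊆ Set.range g)
    (α : X → X → ℝ)
    (ψ : ℝ → ℝ)
    (hmono : ∀ s t : ℝ, 0 ≤ s → s ≤ t → ψ s ≤ ψ t)
    (hsum : ∀ t : ℝ, 0 < t → Summable (fun n : ℕ => ψ^[n + 1] t))
    (hcontr : ∀ x y : X, α (g x) (g y) * dist (f x) (f y) ≤
      ψ (max (dist (g x) (g y)) (max ((dist (g x) (f x) + dist (g y) (f y)) / 2)
        ((dist (g x) (f y) + dist (g y) (f x)) / 2))))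
    (hadm : ∀ x y : X, 1 ≤ α (g x) (g y) → 1 ≤ α (f x) (f y))
    (hub : ∀ u v : X, f u = g u → f v = g v →
      ∃ w : X, 1 ≤ α (g u) (g w) ∧ 1 ≤ α (g v) (g w)) :
    ∀ u v : X, f u = g u → f v = g v → g u = g v := by
  intro u v hu hv
  have hψ : IsCComparison_s3 ψ := ⟨fun s hs _ _ hst => hmono s _ hs hst, hsum⟩
  obtain ⟨w₀, huw, hvw⟩ := hub u v hu hv
  choose next hnext using fun x => hrange (Set.mem_range_self x)
  set w : ℕ → X := fun n => next^[n] w₀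
  have hw : ∀ n, g (w (n + 1)) = f (w n) := fun n => by
    simp only [w, Function.iterate_succ_apply', hnext]
  exact tendsto_nhds_unique (tendsto_picard_of_coincidence hψ hcontr hadm hu hw huw)
    (tendsto_picard_of_coincidence hψ hcontr hadm hv hw hvw)

theorem coincidence_values_equal
    {X : Type*} [MetricSpace X] [CompleteSpace X]
    (f g : X → X) (hrange : Set.range f ⊆ Set.range g)
    (hclosed : IsClosed (Set.range g))
    (α : X → X → ℝ) (hα : ∀ x y, 0 ≤ α x y)
    (ψ : ℝ → ℝ)
    (hmono : ∀ s t : ℝ, 0 ≤ s → s ≤ t → ψ s ≤ ψ t)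
    (hnonneg : ∀ t : ℝ, 0 ≤ t → 0 ≤ ψ t)
    (hsum : ∀ t : ℝ, 0 < t → Summable (fun n : ℕ => ψ^[n + 1] t))
    (hcontr : ∀ x y : X, α (g x) (g y) * dist (f x) (f y) ≤
      ψ (max (dist (g x) (g y)) (max ((dist (g x) (f x) + dist (g y) (f y)) / 2)
        ((dist (g x) (f y) + dist (g y) (f x)) / 2))))
    (hadm : ∀ x y : X, 1 ≤ α (g x) (g y) → 1 ≤ α (f x) (f y))
    (hub : ∀ u v : X, f u = g u → f v = g v →
      ∃ w : X, 1 ≤ α (g u) (g w) ∧ 1 ≤ α (g v) (g w)) :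
    ∀ u v : X, f u = g u → f v = g v → g u = g v :=
  coincidence_values_equal_general f g hrange α ψ hmono hsum hcontr hadm hub
end

section
/- Let (X,⪯) be a partially ordered set with complete metric d, f, g : X → X with f(X) ⊆ g(X), g(X) closed, f g-nondecreasing. Suppose there exists λ ∈ (0,1) with d(fx,fy) ≤ λ·d(gx,gy) for all x,y with gx ⪯ gy, there exists x₀ with gx₀ ⪯ fx₀, and (X,⪯,d) is g-regular. Then f and g have a coincidence point. If additionally every pair of coincidence points has a common ⪯-upper bound under g and f, g commute at coincidence points, the common fixed point exists and is unique. -/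
/-!
Choose a lift `s` of `f` along `g`, i.e. `g (s x) = f x`, and run the Jungck iteration
`x, s x, s (s x), …`. Along `g`-comparable pairs the iteration is monotone and contracts
`g`-distances by `lam`, so starting from `x₀` the values `g (s^[n] x₀)` form an increasing Cauchy
sequence; its limit lies in the closed set `range g`, say it is `g z`, and `g`-regularity lets the
contraction pass to the limit, giving `f z = g z`. Starting instead from a common upper bound `g w`
of two coincidence points, the iteration converges to both of their `g`-values, which are therefore
equal; applied to `z` and to `g z` (a coincidence point by commutativity) this makes `g z` the
unique common fixed point.
-/

open Filter Topology

namespace OrderedCoincidence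

variable {X : Type*} [PartialOrder X] {f g s : X → X}

theorem lift_le_lift (hs : ∀ x, g (s x) = f x) (hmono : ∀ x y, g x ≤ g y → f x ≤ f y)
    {a b : X} (hab : g a ≤ g b) : g (s a) ≤ g (s b) := by
  rw [hs, hs]
  exact hmono a b hab

theorem iterate_le_iterate (hs : ∀ x, g (s x) = f x) (hmono : ∀ x y, g x ≤ g y → f x ≤ f y)
    {a b : X} (hab : g a ≤ g b) (n : ℕ) : g (s^[n] a) ≤ g (s^[n] b) := by
  induction n generalizing a b with
  | zero => exact hab
  | succ n ih => exact ih (lift_le_lift hs hmono hab)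

theorem monotone_iterate (hs : ∀ x, g (s x) = f x) (hmono : ∀ x y, g x ≤ g y → f x ≤ f y)
    {x : X} (hx : g x ≤ f x) : Monotone fun n => g (s^[n] x) :=
  monotone_nat_of_le_succ fun n => iterate_le_iterate hs hmono (b := s x) (by rwa [hs]) n

variable [MetricSpace X] {lam : ℝ}

theorem apply_eq_of_apply_eq
    (hcontr : ∀ x y, g x ≤ g y → dist (f x) (f y) ≤ lam * dist (g x) (g y))
    {a b : X} (hab : g a = g b) : f a = f b :=
  dist_le_zero.mp (by simpa [hab] using hcontr a b hab.le)

theorem dist_iterate_le (hs : ∀ x, g (s x) = f x) (hmono : ∀ x y, g x ≤ g y → f x ≤ f y)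
    (hcontr : ∀ x y, g x ≤ g y → dist (f x) (f y) ≤ lam * dist (g x) (g y)) (hlam : 0 ≤ lam)
    {a b : X} (hab : g a ≤ g b) (n : ℕ) :
    dist (g (s^[n] a)) (g (s^[n] b)) ≤ lam ^ n * dist (g a) (g b) := by
  induction n generalizing a b with
  | zero => simp
  | succ n ih =>
    calc dist (g (s^[n] (s a))) (g (s^[n] (s b)))
        ≤ lam ^ n * dist (g (s a)) (g (s b)) := ih (lift_le_lift hs hmono hab)
      _ = lam ^ n * dist (f a) (f b) := by rw [hs, hs]
      _ ≤ lam ^ n * (lam * dist (g a) (g b)) := by gcongr; exact hcontr a b hab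
      _ = lam ^ (n + 1) * dist (g a) (g b) := by ring

theorem apply_iterate_of_coincidence (hs : ∀ x, g (s x) = f x)
    (hcontr : ∀ x y, g x ≤ g y → dist (f x) (f y) ≤ lam * dist (g x) (g y))
    {u : X} (hu : f u = g u) (n : ℕ) : g (s^[n] u) = g u := by
  induction n with
  | zero => rfl
  | succ n ih => rw [Function.iterate_succ_apply', hs, apply_eq_of_apply_eq hcontr ih, hu]

theorem tendsto_iterate_of_coincidence (hs : ∀ x, g (s x) = f x)
    (hmono : ∀ x y, g x ≤ g y → f x ≤ f y)
    (hcontr : ∀ x y, g x ≤ g y → dist (f x) (f y) ≤ lam * dist (g x) (g y))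
    (hlam0 : 0 ≤ lam) (hlam1 : lam < 1) {u w : X} (hu : f u = g u) (huw : g u ≤ g w) :
    Tendsto (fun n => g (s^[n] w)) atTop (𝓝 (g u)) := by
  have hdist := dist_iterate_le hs hmono hcontr hlam0 huw
  simp only [apply_iterate_of_coincidence hs hcontr hu] at hdist
  refine tendsto_iff_dist_tendsto_zero.2 <| squeeze_zero (fun _ => dist_nonneg)
    (fun n => (dist_comm _ _).trans_le (hdist n)) ?_
  simpa using (tendsto_pow_atTop_nhds_zero_of_lt_one hlam0 hlam1).mul_const (dist (g u) (g w))

theorem apply_eq_of_coincidence_of_le (hs : ∀ x, g (s x) = f x)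
    (hmono : ∀ x y, g x ≤ g y → f x ≤ f y)
    (hcontr : ∀ x y, g x ≤ g y → dist (f x) (f y) ≤ lam * dist (g x) (g y))
    (hlam0 : 0 ≤ lam) (hlam1 : lam < 1) {u v w : X} (hu : f u = g u) (hv : f v = g v)
    (huw : g u ≤ g w) (hvw : g v ≤ g w) : g u = g v :=
  tendsto_nhds_unique (tendsto_iterate_of_coincidence hs hmono hcontr hlam0 hlam1 hu huw)
    (tendsto_iterate_of_coincidence hs hmono hcontr hlam0 hlam1 hv hvw)

theorem cauchySeq_iterate (hs : ∀ x, g (s x) = f x) (hmono : ∀ x y, g x ≤ g y → f x ≤ f y)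
    (hcontr : ∀ x y, g x ≤ g y → dist (f x) (f y) ≤ lam * dist (g x) (g y))
    (hlam0 : 0 ≤ lam) (hlam1 : lam < 1) {x : X} (hx : g x ≤ f x) :
    CauchySeq fun n => g (s^[n] x) :=
  cauchySeq_of_le_geometric lam (dist (g x) (g (s x))) hlam1 fun n =>
    (dist_iterate_le hs hmono hcontr hlam0 (b := s x) (by rwa [hs]) n).trans_eq (mul_comm _ _)

theorem tendsto_apply_of_tendsto_of_le
    (hcontr : ∀ x y, g x ≤ g y → dist (f x) (f y) ≤ lam * dist (g x) (g y))
    {ι : Type*} {l : Filter ι} {x : ι → X} {z : X} (hle : ∀ i, g (x i) ≤ g z)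
    (hlim : Tendsto (fun i => g (x i)) l (𝓝 (g z))) :
    Tendsto (fun i => f (x i)) l (𝓝 (f z)) := by
  refine tendsto_iff_dist_tendsto_zero.2 <| squeeze_zero (fun _ => dist_nonneg)
    (fun i => hcontr (x i) z (hle i)) ?_
  simpa using (tendsto_iff_dist_tendsto_zero.1 hlim).const_mul lam

theorem exists_coincidence [CompleteSpace X] (hs : ∀ x, g (s x) = f x)
    (hmono : ∀ x y, g x ≤ g y → f x ≤ f y)
    (hcontr : ∀ x y, g x ≤ g y → dist (f x) (f y) ≤ lam * dist (g x) (g y))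
    (hlam0 : 0 ≤ lam) (hlam1 : lam < 1) (hclosed : IsClosed (Set.range g))
    (hreg : ∀ (x : ℕ → X) (z : X), (∀ n, g (x n) ≤ g (x (n + 1))) →
      Tendsto (fun n => g (x n)) atTop (𝓝 (g z)) →
      ∃ φ : ℕ → ℕ, StrictMono φ ∧ ∀ k, g (x (φ k)) ≤ g z)
    {x : X} (hx : g x ≤ f x) : ∃ z, f z = g z := by
  obtain ⟨p, hp⟩ := cauchySeq_tendsto_of_complete (cauchySeq_iterate hs hmono hcontr hlam0 hlam1 hx)
  obtain ⟨z, rfl⟩ : p ∈ Set.range g := hclosed.mem_of_tendsto hp (.of_forall fun n => ⟨_, rfl⟩)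
  obtain ⟨φ, hφ, hle⟩ := hreg _ z (fun n => monotone_iterate hs hmono hx n.le_succ) hp
  have hshift : Tendsto (fun k => g (s^[φ k + 1] x)) atTop (𝓝 (g z)) :=
    hp.comp ((tendsto_add_atTop_nat 1).comp hφ.tendsto_atTop)
  simp only [Function.iterate_succ_apply', hs] at hshift
  exact ⟨z, tendsto_nhds_unique
    (tendsto_apply_of_tendsto_of_le hcontr hle (hp.comp hφ.tendsto_atTop)) hshift⟩

theorem existsUnique_common_fixedPoint (hs : ∀ x, g (s x) = f x)
    (hmono : ∀ x y, g x ≤ g y → f x ≤ f y)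
    (hcontr : ∀ x y, g x ≤ g y → dist (f x) (f y) ≤ lam * dist (g x) (g y))
    (hlam0 : 0 ≤ lam) (hlam1 : lam < 1)
    (hbound : ∀ u v, f u = g u → f v = g v → ∃ w, g u ≤ g w ∧ g v ≤ g w)
    (hcomm : ∀ z, f z = g z → f (g z) = g (f z)) {z : X} (hz : f z = g z) :
    ∃! y, f y = y ∧ g y = y := by
  have hg_eq {u : X} (hu : f u = g u) : g u = g z := by
    obtain ⟨w, huw, hzw⟩ := hbound u z hu hz
    exact apply_eq_of_coincidence_of_le hs hmono hcontr hlam0 hlam1 hu hz huw hzw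
  have hgz : f (g z) = g (g z) := by rw [hcomm z hz, hz]
  refine ⟨g z, ⟨hgz.trans (hg_eq hgz), hg_eq hgz⟩, fun y ⟨hfy, hgy⟩ => ?_⟩
  exact hgy.symm.trans (hg_eq (hfy.trans hgy.symm))

end OrderedCoincidence

open OrderedCoincidence in
theorem ordered_coincidence_common_fixed_point_banach
    {X : Type*} [PartialOrder X] [MetricSpace X] [CompleteSpace X]
    (f g : X → X) (hrange : Set.range f ⊆ Set.range g)
    (hclosed : IsClosed (Set.range g))
    (hmonof : ∀ x y : X, g x ≤ g y → f x ≤ f y)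
    (lam : ℝ) (hlam0 : 0 < lam) (hlam1 : lam < 1)
    (hcontr : ∀ x y : X, g x ≤ g y → dist (f x) (f y) ≤ lam * dist (g x) (g y))
    (hx0 : ∃ x0 : X, g x0 ≤ f x0)
    (hreg : ∀ (x : ℕ → X) (z : X), (∀ n, g (x n) ≤ g (x (n + 1))) →
      Tendsto (fun n => g (x n)) atTop (𝓝 (g z)) →
      ∃ φ : ℕ → ℕ, StrictMono φ ∧ ∀ k, g (x (φ k)) ≤ g z) :
    (∃ z : X, f z = g z) ∧
      ((∀ u v : X, f u = g u → f v = g v → ∃ w : X, g u ≤ g w ∧ g v ≤ g w) →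
        (∀ z : X, f z = g z → f (g z) = g (f z)) →
          ∃! z : X, f z = z ∧ g z = z) := by
  choose s hs using Set.range_subset_iff.1 hrange
  obtain ⟨x0, hx0⟩ := hx0
  obtain ⟨z, hz⟩ := exists_coincidence hs hmonof hcontr hlam0.le hlam1 hclosed hreg hx0
  exact ⟨⟨z, hz⟩, fun hbound hcomm =>
    existsUnique_common_fixedPoint hs hmonof hcontr hlam0.le hlam1 hbound hcomm hz⟩
end

section
/- Let (X,d) be a complete metric space, A₁, A₂ nonempty closed subsets, Y = A₁ ∪ A₂, and f, g : Y → Y with g(A₁), g(A₂) closed, f(A₁) ⊆ g(A₂), f(A₂) ⊆ g(A₁), g injective, and there exists λ ∈ (0,1) with d(fx,fy) ≤ λ·d(gx,gy) for all (x,y) ∈ A₁ × A₂. Then f and g have a coincidence point in A₁ ∩ A₂, and if f, g commute at coincidence points they have a unique common fixed point belonging to A₁ ∩ A₂. -/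
/-!
Since `g` is injective on `Y = A₁ ∪ A₂`, the map `T = f ∘ g⁻¹` is well defined on `g(Y)`; it sends
`g(A₁)` into `g(A₂)` and back, and is a `λ`-contraction between the two closed sets. Its Picard
iterates are Cauchy, their even and odd terms lie in `g(A₁)` and `g(A₂)`, so the limit is a fixed
point `g z` of `T` with `z ∈ A₁ ∩ A₂`, i.e. `f z = g z`. Any coincidence point `y ∈ Y` satisfies
`d(gy, gz) = d(fy, fz) ≤ λ d(gy, gz)`, hence `y = z`; if `f` and `g` commute there, `g z` is again a
coincidence point, so `g z = z`.
-/

open Set Filter Topology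

theorem dist_iterate_succ_le_geometric_of_mapsTo {X : Type*} [PseudoMetricSpace X] {T : X → X}
    {S : Set X} (hS : MapsTo T S S) {r : ℝ} (hr : 0 ≤ r)
    (hT : ∀ x ∈ S, dist (T x) (T (T x)) ≤ r * dist x (T x)) {x : X} (hx : x ∈ S) (n : ℕ) :
    dist (T^[n] x) (T^[n + 1] x) ≤ dist x (T x) * r ^ n := by
  induction n with
  | zero => simp
  | succ n ih =>
    rw [Function.iterate_succ_apply'] at ih
    calc dist (T^[n + 1] x) (T^[n + 1 + 1] x) = dist (T (T^[n] x)) (T (T (T^[n] x))) := by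
          simp only [Function.iterate_succ_apply']
      _ ≤ r * dist (T^[n] x) (T (T^[n] x)) := hT _ (hS.iterate n hx)
      _ ≤ r * (dist x (T x) * r ^ n) := by gcongr
      _ = dist x (T x) * r ^ (n + 1) := by ring

/-- The fixed point theorem of Kirk, Srinivasan and Veeramani for cyclic contractions. -/
theorem exists_mem_inter_isFixedPt_of_cyclic_contraction {X : Type*} [MetricSpace X]
    [CompleteSpace X] {A B : Set X} (hA : IsClosed A) (hB : IsClosed B) (hAne : A.Nonempty)
    {T : X → X} (hAB : MapsTo T A B) (hBA : MapsTo T B A) {r : ℝ} (hr0 : 0 ≤ r) (hr1 : r < 1)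
    (hT : ∀ x ∈ A, ∀ y ∈ B, dist (T x) (T y) ≤ r * dist x y) :
    ∃ p ∈ A ∩ B, Function.IsFixedPt T p := by
  obtain ⟨x₀, hx₀⟩ := hAne
  set u : ℕ → X := fun n => T^[n] x₀
  have hu_succ : ∀ n, T (u n) = u (n + 1) := fun n => (Function.iterate_succ_apply' T n x₀).symm
  have hu_even : ∀ n, u (2 * n) ∈ A := fun n => by
    show T^[2 * n] x₀ ∈ A
    rw [Function.iterate_mul]
    exact (hBA.comp hAB).iterate n hx₀
  have hu_odd : ∀ n, u (2 * n + 1) ∈ B := fun n => hu_succ (2 * n) ▸ hAB (hu_even n)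
  have hstep : ∀ x ∈ A ∪ B, dist (T x) (T (T x)) ≤ r * dist x (T x) := by
    rintro x (hx | hx)
    · exact hT x hx (T x) (hAB hx)
    · rw [dist_comm, dist_comm x]
      exact hT (T x) (hBA hx) x hx
  have hS : MapsTo T (A ∪ B) (A ∪ B) := union_comm B A ▸ hAB.union_union hBA
  obtain ⟨p, hp⟩ := cauchySeq_tendsto_of_complete <| cauchySeq_of_le_geometric r _ hr1 <|
    dist_iterate_succ_le_geometric_of_mapsTo hS hr0 hstep (Or.inl hx₀)
  have hsub : ∀ k, Tendsto (fun n => u (2 * n + k)) atTop (𝓝 p) := fun k =>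
    hp.comp (tendsto_atTop_atTop.2 fun b => ⟨b, fun n hn => by omega⟩)
  have hpA : p ∈ A := hA.mem_of_tendsto (hsub 0) (.of_forall hu_even)
  have hpB : p ∈ B := hB.mem_of_tendsto (hsub 1) (.of_forall hu_odd)
  have hTp : Tendsto (fun n => T (u (2 * n + 1))) atTop (𝓝 (T p)) := by
    refine tendsto_iff_dist_tendsto_zero.2 <|
      squeeze_zero (fun _ => dist_nonneg) (fun n => ?_) (g := fun n => r * dist p (u (2 * n + 1))) ?_
    · rw [dist_comm]
      exact hT p hpA _ (hu_odd n)
    · simpa using ((tendsto_const_nhds (x := p)).dist (hsub 1)).const_mul r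
  simp only [hu_succ] at hTp
  exact ⟨p, ⟨hpA, hpB⟩, tendsto_nhds_unique hTp (hsub 2)⟩

section Coincidence

variable {X : Type*} [MetricSpace X] {A₁ A₂ : Set X} {f g : X → X} {lam : ℝ}

theorem exists_coincidence_mem_inter_of_cyclic_contraction [CompleteSpace X]
    (hA₁ne : A₁.Nonempty) (hgA₁cl : IsClosed (g '' A₁)) (hgA₂cl : IsClosed (g '' A₂))
    (hf₁ : f '' A₁ ⊆ g '' A₂) (hf₂ : f '' A₂ ⊆ g '' A₁) (hginj : InjOn g (A₁ ∪ A₂))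
    (hlam0 : 0 ≤ lam) (hlam1 : lam < 1)
    (hcontr : ∀ x ∈ A₁, ∀ y ∈ A₂, dist (f x) (f y) ≤ lam * dist (g x) (g y)) :
    ∃ z ∈ A₁ ∩ A₂, f z = g z := by
  have : Nonempty X := hA₁ne.to_subtype.map Subtype.val
  set T := f ∘ Function.invFunOn g (A₁ ∪ A₂)
  have hTg : ∀ x ∈ A₁ ∪ A₂, T (g x) = f x := fun x hx =>
    congrArg f (hginj.leftInvOn_invFunOn hx)
  have hT_mapsTo : ∀ {s t : Set X}, s ⊆ A₁ ∪ A₂ → f '' s ⊆ g '' t → MapsTo T (g '' s) (g '' t) := by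
    rintro s t hs hst _ ⟨x, hx, rfl⟩
    rw [hTg x (hs hx)]
    exact hst (mem_image_of_mem f hx)
  obtain ⟨p, hp, hTp⟩ := exists_mem_inter_isFixedPt_of_cyclic_contraction hgA₁cl hgA₂cl
    (hA₁ne.image g) (hT_mapsTo subset_union_left hf₁) (hT_mapsTo subset_union_right hf₂) hlam0 hlam1
    (by
      rintro _ ⟨x, hx, rfl⟩ _ ⟨y, hy, rfl⟩
      rw [hTg x (Or.inl hx), hTg y (Or.inr hy)]
      exact hcontr x hx y hy)
  rw [← hginj.image_inter subset_union_left subset_union_right] at hp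
  obtain ⟨z, hz, rfl⟩ := hp
  exact ⟨z, hz, (hTg z (Or.inl hz.1)).symm.trans hTp⟩

theorem eq_of_coincidence_of_cyclic_contraction (hginj : InjOn g (A₁ ∪ A₂)) (hlam1 : lam < 1)
    (hcontr : ∀ x ∈ A₁, ∀ y ∈ A₂, dist (f x) (f y) ≤ lam * dist (g x) (g y))
    {y z : X} (hy : y ∈ A₁ ∪ A₂) (hz : z ∈ A₁ ∩ A₂) (hfy : f y = g y) (hfz : f z = g z) :
    y = z := by
  have hle : dist (g y) (g z) ≤ lam * dist (g y) (g z) :=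
    calc dist (g y) (g z) = dist (f y) (f z) := by rw [hfy, hfz]
      _ ≤ lam * dist (g y) (g z) := by
        rcases hy with hy | hy
        · exact hcontr y hy z hz.2
        · rw [dist_comm, dist_comm (g y)]
          exact hcontr z hz.1 y hy
  have hdist : dist (g y) (g z) = 0 := by nlinarith [dist_nonneg (x := g y) (y := g z)]
  exact hginj hy (Or.inl hz.1) (dist_eq_zero.1 hdist)

end Coincidence

theorem cyclic_coincidence_common_fixed_point_banach_general
    {X : Type*} [MetricSpace X] [CompleteSpace X]
    (A₁ A₂ : Set X) (hA₁ne : A₁.Nonempty)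
    (f g : X → X)
    (hgY : Set.MapsTo g (A₁ ∪ A₂) (A₁ ∪ A₂))
    (hgA₁cl : IsClosed (g '' A₁)) (hgA₂cl : IsClosed (g '' A₂))
    (hf₁ : f '' A₁ ⊆ g '' A₂) (hf₂ : f '' A₂ ⊆ g '' A₁)
    (hginj : Set.InjOn g (A₁ ∪ A₂))
    (lam : ℝ) (hlam0 : 0 < lam) (hlam1 : lam < 1)
    (hcontr : ∀ x ∈ A₁, ∀ y ∈ A₂, dist (f x) (f y) ≤ lam * dist (g x) (g y)) :
    (∃ z ∈ A₁ ∩ A₂, f z = g z) ∧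
      ((∀ z ∈ A₁ ∪ A₂, f z = g z → f (g z) = g (f z)) →
        ∃! z : X, z ∈ A₁ ∩ A₂ ∧ f z = z ∧ g z = z) := by
  obtain ⟨z, hz, hfz⟩ := exists_coincidence_mem_inter_of_cyclic_contraction hA₁ne hgA₁cl hgA₂cl
    hf₁ hf₂ hginj hlam0.le hlam1 hcontr
  refine ⟨⟨z, hz, hfz⟩, fun hcomm => ?_⟩
  have huniq : ∀ y ∈ A₁ ∪ A₂, f y = g y → y = z := fun y hy hfy =>
    eq_of_coincidence_of_cyclic_contraction hginj hlam1 hcontr hy hz hfy hfz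
  have hgz : g z = z := huniq (g z) (hgY (Or.inl hz.1)) (by rw [hcomm z (Or.inl hz.1) hfz, hfz])
  exact ⟨z, ⟨hz, hfz.trans hgz, hgz⟩, fun r ⟨hr, hfr, hgr⟩ =>
    huniq r (Or.inl hr.1) (hfr.trans hgr.symm)⟩

theorem cyclic_coincidence_common_fixed_point_banach
    {X : Type*} [MetricSpace X] [CompleteSpace X]
    (A₁ A₂ : Set X) (hA₁ne : A₁.Nonempty) (hA₂ne : A₂.Nonempty)
    (hA₁cl : IsClosed A₁) (hA₂cl : IsClosed A₂)
    (f g : X → X)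
    (hfY : Set.MapsTo f (A₁ ∪ A₂) (A₁ ∪ A₂)) (hgY : Set.MapsTo g (A₁ ∪ A₂) (A₁ ∪ A₂))
    (hgA₁cl : IsClosed (g '' A₁)) (hgA₂cl : IsClosed (g '' A₂))
    (hf₁ : f '' A₁ ⊆ g '' A₂) (hf₂ : f '' A₂ ⊆ g '' A₁)
    (hginj : Set.InjOn g (A₁ ∪ A₂))
    (lam : ℝ) (hlam0 : 0 < lam) (hlam1 : lam < 1)
    (hcontr : ∀ x ∈ A₁, ∀ y ∈ A₂, dist (f x) (f y) ≤ lam * dist (g x) (g y)) :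
    (∃ z ∈ A₁ ∩ A₂, f z = g z) ∧
      ((∀ z ∈ A₁ ∪ A₂, f z = g z → f (g z) = g (f z)) →
        ∃! z : X, z ∈ A₁ ∩ A₂ ∧ f z = z ∧ g z = z) :=
  cyclic_coincidence_common_fixed_point_banach_general A₁ A₂ hA₁ne f g hgY hgA₁cl hgA₂cl hf₁ hf₂
    hginj lam hlam0 hlam1 hcontr
end
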